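/- arXiv:2209.09538 — 3 statements merged into one kernel-verified Lean document; each statement's English description precedes it below -/
import Mathlib

section
/- Let (X, A, Y) be random with A ∈ {0,1} and Y ∈ L²(P), fix a ∈ {0,1}, let π(X) be a version of P(A=a | X) and μ a measurable function with E[1(A=a)Y | X] = μ(X)π(X) almost surely. Let π̂, μ̂ be measurable functions with ε ≤ π̂ ≤ 1 pointwise for some ε > 0 and with π, π̂, μ, μ̂ square-integrable. Then E[ 1(A=a)(Y − μ̂(X))/π̂(X) + μ̂(X) ] − E[μ(X)] = E[ ( (π(X) − π̂(X)) / π̂(X) ) · ( μ(X) − μ̂(X) ) ], and consequently | E[ 1(A=a)(Y − μ̂(X))/π̂(X) + μ̂(X) ] − E[μ(X)] | ≤ ε^{-1} ‖π̂ − π‖_{2,P} ‖μ̂ − μ‖_{2,P}. -/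
/-!
Conditioning on `X`, the residual `1(A=a)(Y - μ̂(X))` has conditional mean `(μ - μ̂)(X) π(X)`,
and the weight `1/π̂(X)` is a bounded `σ(X)`-measurable factor that can be pulled out of the
conditional expectation. Hence the inverse-probability-weighted term has mean
`E[(μ - μ̂) π / π̂]`, and subtracting `E[μ - μ̂]` leaves `E[(π - π̂)/π̂ · (μ - μ̂)]`, a product of
the two nuisance errors. Bounding `1/π̂` by `ε⁻¹` and applying Cauchy–Schwarz gives the estimate.
-/

open MeasureTheory ProbabilityTheory

lemma abs_inv_le_inv_of_le {c x : ℝ} (hc : 0 < c) (hx : c ≤ x) : |x⁻¹| ≤ c⁻¹ := by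
  rw [abs_inv, abs_of_pos (hc.trans_le hx)]
  exact inv_anti₀ hc hx

section CauchySchwarz

variable {Ω : Type*} [MeasurableSpace Ω] {μ : Measure Ω}

lemma integral_abs_mul_le_sqrt_mul_sqrt {u v : Ω → ℝ} (hu : MemLp u 2 μ) (hv : MemLp v 2 μ) :
    ∫ ω, |u ω| * |v ω| ∂μ ≤ √(∫ ω, u ω ^ 2 ∂μ) * √(∫ ω, v ω ^ 2 ∂μ) := by
  rw [← ENNReal.ofReal_ofNat] at hu hv
  simpa [Real.sqrt_eq_rpow, Real.rpow_two, sq_abs] using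
    integral_mul_norm_le_Lp_mul_Lq Real.HolderConjugate.two_two hu hv

lemma abs_integral_mul_mul_le [NeZero μ] {w u v : Ω → ℝ} {C : ℝ} (hw : AEStronglyMeasurable w μ)
    (hwC : ∀ᵐ ω ∂μ, |w ω| ≤ C) (hu : MemLp u 2 μ) (hv : MemLp v 2 μ) :
    |∫ ω, w ω * u ω * v ω ∂μ| ≤ C * (√(∫ ω, u ω ^ 2 ∂μ) * √(∫ ω, v ω ^ 2 ∂μ)) := by
  have hC : 0 ≤ C := by
    obtain ⟨ω, hω⟩ := hwC.exists
    exact (abs_nonneg _).trans hω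
  have huv : Integrable (fun ω => |u ω| * |v ω|) μ := by
    simpa only [Pi.mul_apply, abs_mul] using (hu.integrable_mul hv).abs
  have hwuv : Integrable (fun ω => w ω * u ω * v ω) μ := by
    simpa only [Pi.mul_apply, mul_assoc] using
      (hu.integrable_mul hv).bdd_mul hw (by simpa only [Real.norm_eq_abs] using hwC)
  calc |∫ ω, w ω * u ω * v ω ∂μ| ≤ ∫ ω, |w ω * u ω * v ω| ∂μ := abs_integral_le_integral_abs
    _ ≤ ∫ ω, C * (|u ω| * |v ω|) ∂μ := by
      refine integral_mono_ae hwuv.abs (huv.const_mul C) ?_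
      filter_upwards [hwC] with ω hω
      rw [abs_mul, abs_mul, mul_assoc]
      exact mul_le_mul_of_nonneg_right hω (by positivity)
    _ = C * ∫ ω, |u ω| * |v ω| ∂μ := integral_const_mul C _
    _ ≤ C * (√(∫ ω, u ω ^ 2 ∂μ) * √(∫ ω, v ω ^ 2 ∂μ)) :=
      mul_le_mul_of_nonneg_left (integral_abs_mul_le_sqrt_mul_sqrt hu hv) hC

end CauchySchwarz

section DoublyRobust

variable {Ω : Type*} {m m₀ : MeasurableSpace Ω} {P : Measure Ω}

lemma integral_mul_eq_integral_mul_condExp [IsFiniteMeasure P] (hm : m ≤ m₀) {f g : Ω → ℝ}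
    {C : ℝ} (hf : StronglyMeasurable[m] f) (hfC : ∀ᵐ ω ∂P, ‖f ω‖ ≤ C) (hg : Integrable g P) :
    ∫ ω, f ω * g ω ∂P = ∫ ω, f ω * P[g|m] ω ∂P := by
  rw [← integral_condExp hm]
  exact integral_congr_ae (condExp_stronglyMeasurable_mul_of_bound hm hf hg C hfC)

lemma condExp_mul_sub_ae_eq {e Y k : Ω → ℝ} (hk : StronglyMeasurable[m] k)
    (he : Integrable e P) (heY : Integrable (e * Y) P) (hke : Integrable (k * e) P) :
    P[fun ω => e ω * (Y ω - k ω)|m] =ᵐ[P] P[e * Y|m] - k * P[e|m] := by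
  have hsplit : (fun ω => e ω * (Y ω - k ω)) = e * Y - k * e := by
    ext ω
    simp only [Pi.sub_apply, Pi.mul_apply]
    ring
  rw [hsplit]
  exact (condExp_sub heY hke m).trans
    (Filter.EventuallyEq.rfl.sub (condExp_mul_of_stronglyMeasurable_left hk hke he))

theorem integral_aipw_sub_integral_eq [IsFiniteMeasure P] (hm : m ≤ m₀)
    {e Y π μ π' μ' : Ω → ℝ} {c : ℝ} (hc : 0 < c)
    (hπ' : Measurable[m] π') (hπ'c : ∀ᵐ ω ∂P, c ≤ π' ω) (hμ' : Measurable[m] μ')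
    (hπ : π =ᵐ[P] P[e|m]) (hμ : μ * π =ᵐ[P] P[e * Y|m])
    (he : Integrable e P) (heY : Integrable (e * Y) P) (hμ'e : Integrable (μ' * e) P)
    (hμ'i : Integrable μ' P) (hμi : Integrable μ P) :
    ∫ ω, (e ω * (Y ω - μ' ω) / π' ω + μ' ω) ∂P - ∫ ω, μ ω ∂P
      = ∫ ω, (π ω - π' ω) / π' ω * (μ ω - μ' ω) ∂P := by
  set g : Ω → ℝ := fun ω => e ω * (Y ω - μ' ω)
  have hg : Integrable g P := by
    refine (heY.sub hμ'e).congr (ae_of_all _ fun ω => ?_)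
    simp only [g, Pi.sub_apply, Pi.mul_apply]
    ring
  have hcondg : P[g|m] =ᵐ[P] (μ - μ') * π := by
    filter_upwards [condExp_mul_sub_ae_eq hμ'.stronglyMeasurable he heY hμ'e, hπ, hμ]
      with ω h hπω hμω
    simp only [Pi.sub_apply, Pi.mul_apply] at h hπω hμω ⊢
    rw [h, ← hπω, ← hμω]
    ring
  have hw : StronglyMeasurable[m] fun ω => (π' ω)⁻¹ := hπ'.inv.stronglyMeasurable
  have hwC : ∀ᵐ ω ∂P, ‖(π' ω)⁻¹‖ ≤ c⁻¹ :=
    hπ'c.mono fun ω hω => abs_inv_le_inv_of_le hc hω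
  have hwg : Integrable (fun ω => (π' ω)⁻¹ * g ω) P :=
    hg.bdd_mul (hw.mono hm).aestronglyMeasurable hwC
  have hwcondg : Integrable (fun ω => (π' ω)⁻¹ * ((μ ω - μ' ω) * π ω)) P :=
    ((integrable_condExp (m := m) (f := g)).bdd_mul (hw.mono hm).aestronglyMeasurable hwC).congr
      (hcondg.mono fun ω h => by simp only [h, Pi.mul_apply, Pi.sub_apply])
  have htower : ∫ ω, (π' ω)⁻¹ * g ω ∂P = ∫ ω, (π' ω)⁻¹ * ((μ ω - μ' ω) * π ω) ∂P :=
    (integral_mul_eq_integral_mul_condExp hm hw hwC hg).trans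
      (integral_congr_ae (hcondg.mono fun ω h => by simp only [h, Pi.mul_apply, Pi.sub_apply]))
  calc ∫ ω, (e ω * (Y ω - μ' ω) / π' ω + μ' ω) ∂P - ∫ ω, μ ω ∂P
      = ∫ ω, (π' ω)⁻¹ * g ω ∂P + ∫ ω, μ' ω ∂P - ∫ ω, μ ω ∂P := by
        rw [← integral_add hwg hμ'i]
        simp only [g, div_eq_inv_mul]
    _ = ∫ ω, (π' ω)⁻¹ * ((μ ω - μ' ω) * π ω) ∂P - ∫ ω, (μ ω - μ' ω) ∂P := by
        rw [htower, integral_sub hμi hμ'i]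
        ring
    _ = ∫ ω, (π ω - π' ω) / π' ω * (μ ω - μ' ω) ∂P := by
        rw [← integral_sub hwcondg (g := fun ω => μ ω - μ' ω) (hμi.sub hμ'i)]
        refine integral_congr_ae (hπ'c.mono fun ω hω => ?_)
        have : π' ω ≠ 0 := (hc.trans_le hω).ne'
        field_simp

end DoublyRobust

theorem stmt14_general {Ω 𝒳 : Type*} [MeasurableSpace Ω] [MeasurableSpace 𝒳]
    (P : Measure Ω) [IsProbabilityMeasure P]
    (X : Ω → 𝒳) (A : Ω → Bool) (Y : Ω → ℝ) (a : Bool)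
    (hX : Measurable X) (hA : Measurable A) (hY : MemLp Y 2 P)
    (pt mt phat mhat : 𝒳 → ℝ)
    (hphatm : Measurable phat) (hmhatm : Measurable mhat)
    (ε : ℝ) (hε : 0 < ε) (hphat : ∀ x, ε ≤ phat x ∧ phat x ≤ 1)
    -- `pt (X ·)` is a version of `P(A = a | X)`
    (hpt : (fun ω => pt (X ω)) =ᵐ[P]
      P[fun ω => if A ω = a then (1 : ℝ) else 0 | MeasurableSpace.comap X inferInstance])
    -- `E[1(A=a) Y | X] = mt(X) pt(X)` a.s.
    (hmt : (fun ω => mt (X ω) * pt (X ω)) =ᵐ[P]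
      P[fun ω => (if A ω = a then (1 : ℝ) else 0) * Y ω | MeasurableSpace.comap X inferInstance])
    -- square integrability of the nuisance functions
    (hptL2 : MemLp (fun ω => pt (X ω)) 2 P) (hphatL2 : MemLp (fun ω => phat (X ω)) 2 P)
    (hmtL2 : MemLp (fun ω => mt (X ω)) 2 P) (hmhatL2 : MemLp (fun ω => mhat (X ω)) 2 P) :
    ((∫ ω, ((if A ω = a then (1 : ℝ) else 0) * (Y ω - mhat (X ω)) / phat (X ω) + mhat (X ω)) ∂P)
        - ∫ ω, mt (X ω) ∂P
      = ∫ ω, ((pt (X ω) - phat (X ω)) / phat (X ω)) * (mt (X ω) - mhat (X ω)) ∂P) ∧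
    (|(∫ ω, ((if A ω = a then (1 : ℝ) else 0) * (Y ω - mhat (X ω)) / phat (X ω) + mhat (X ω)) ∂P)
        - ∫ ω, mt (X ω) ∂P|
      ≤ ε⁻¹ * (Real.sqrt (∫ ω, (phat (X ω) - pt (X ω)) ^ 2 ∂P) *
          Real.sqrt (∫ ω, (mhat (X ω) - mt (X ω)) ^ 2 ∂P))) := by
  have hXm : Measurable[MeasurableSpace.comap X inferInstance] X := comap_measurable X
  have he : Measurable fun ω => if A ω = a then (1 : ℝ) else 0 :=
    Measurable.ite (hA (measurableSet_singleton a)) measurable_const measurable_const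
  have he1 : ∀ᵐ ω ∂P, ‖if A ω = a then (1 : ℝ) else 0‖ ≤ 1 :=
    ae_of_all _ fun ω => by split_ifs <;> simp
  have hbias := integral_aipw_sub_integral_eq (π' := fun ω => phat (X ω))
    (μ' := fun ω => mhat (X ω)) hX.comap_le hε (hphatm.comp hXm)
    (ae_of_all _ fun ω => (hphat (X ω)).1) (hmhatm.comp hXm) hpt hmt
    (.of_bound he.aestronglyMeasurable 1 he1)
    ((hY.integrable one_le_two).bdd_mul he.aestronglyMeasurable he1)
    ((hmhatL2.integrable one_le_two).mul_bdd he.aestronglyMeasurable he1)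
    (hmhatL2.integrable one_le_two) (hmtL2.integrable one_le_two)
  refine ⟨hbias, ?_⟩
  rw [hbias]
  calc |∫ ω, (pt (X ω) - phat (X ω)) / phat (X ω) * (mt (X ω) - mhat (X ω)) ∂P|
      = |∫ ω, (phat (X ω))⁻¹ * (phat (X ω) - pt (X ω)) * (mhat (X ω) - mt (X ω)) ∂P| := by
        congr 2 with ω
        ring
    _ ≤ _ := abs_integral_mul_mul_le (hphatm.comp hX).inv.aestronglyMeasurable
        (ae_of_all _ fun ω => abs_inv_le_inv_of_le hε (hphat (X ω)).1)
        (hphatL2.sub hptL2) (hmhatL2.sub hmtL2)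

/-- the doubly-robust (second-order) bias expansion for the
uncentered efficient influence function of a counterfactual mean. -/
theorem stmt14 {Ω 𝒳 : Type*} [MeasurableSpace Ω] [MeasurableSpace 𝒳]
    (P : Measure Ω) [IsProbabilityMeasure P]
    (X : Ω → 𝒳) (A : Ω → Bool) (Y : Ω → ℝ) (a : Bool)
    (hX : Measurable X) (hA : Measurable A) (hYm : Measurable Y) (hY : MemLp Y 2 P)
    (pt mt phat mhat : 𝒳 → ℝ)
    (hptm : Measurable pt) (hmtm : Measurable mt)
    (hphatm : Measurable phat) (hmhatm : Measurable mhat)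
    (ε : ℝ) (hε : 0 < ε) (hphat : ∀ x, ε ≤ phat x ∧ phat x ≤ 1)
    -- `pt (X ·)` is a version of `P(A = a | X)`
    (hpt : (fun ω => pt (X ω)) =ᵐ[P]
      P[fun ω => if A ω = a then (1 : ℝ) else 0 | MeasurableSpace.comap X inferInstance])
    -- `E[1(A=a) Y | X] = mt(X) pt(X)` a.s.
    (hmt : (fun ω => mt (X ω) * pt (X ω)) =ᵐ[P]
      P[fun ω => (if A ω = a then (1 : ℝ) else 0) * Y ω | MeasurableSpace.comap X inferInstance])
    -- square integrability of the nuisance functions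
    (hptL2 : MemLp (fun ω => pt (X ω)) 2 P) (hphatL2 : MemLp (fun ω => phat (X ω)) 2 P)
    (hmtL2 : MemLp (fun ω => mt (X ω)) 2 P) (hmhatL2 : MemLp (fun ω => mhat (X ω)) 2 P) :
    ((∫ ω, ((if A ω = a then (1 : ℝ) else 0) * (Y ω - mhat (X ω)) / phat (X ω) + mhat (X ω)) ∂P)
        - ∫ ω, mt (X ω) ∂P
      = ∫ ω, ((pt (X ω) - phat (X ω)) / phat (X ω)) * (mt (X ω) - mhat (X ω)) ∂P) ∧
    (|(∫ ω, ((if A ω = a then (1 : ℝ) else 0) * (Y ω - mhat (X ω)) / phat (X ω) + mhat (X ω)) ∂P)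
        - ∫ ω, mt (X ω) ∂P|
      ≤ ε⁻¹ * (Real.sqrt (∫ ω, (phat (X ω) - pt (X ω)) ^ 2 ∂P) *
          Real.sqrt (∫ ω, (mhat (X ω) - mt (X ω)) ^ 2 ∂P))) :=
  stmt14_general P X A Y a hX hA hY pt mt phat mhat hphatm hmhatm ε hε hphat hpt hmt hptL2 hphatL2
    hmtL2 hmhatL2
end

section
/- Let Σ be a k×k real matrix and β² > 0 a real number. With the normalized inner product ⟨M₁,M₂⟩ = tr(M₁ᵀM₂)/k and ‖M‖_F = ⟨M,M⟩^{1/2}, set ν* = tr(Σ)/k, α² = ‖ν*I − Σ‖_F², δ² = α² + β², and ρ* = β²/δ². Then (ρ*, ν*) minimizes the function (ρ, ν) ↦ ρ²‖νI − Σ‖_F² + (1−ρ)²β² over (ρ, ν) ∈ ℝ², with minimum value α²β²/δ²; moreover, if α² > 0 this minimizer is unique. -/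
open Matrix

noncomputable section

/-- normalized squared Frobenius norm `‖M‖_F² = tr(MᵀM)/k` -/
def nFrobSq {k : ℕ} (M : Matrix (Fin k) (Fin k) ℝ) : ℝ :=
  Matrix.trace (Mᵀ * M) / k

lemma nFrobSq_nonneg {k : ℕ} (M : Matrix (Fin k) (Fin k) ℝ) : 0 ≤ nFrobSq M := by
  unfold nFrobSq
  apply div_nonneg _ (Nat.cast_nonneg k)
  unfold Matrix.trace
  apply Finset.sum_nonneg
  intro j _
  simp only [Matrix.diag_apply, Matrix.mul_apply, Matrix.transpose_apply]
  exact Finset.sum_nonneg fun i _ => mul_self_nonneg _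

lemma key {k : ℕ} (hk : 0 < k) (Sig : Matrix (Fin k) (Fin k) ℝ) (ν : ℝ) :
    nFrobSq (ν • (1 : Matrix (Fin k) (Fin k) ℝ) - Sig)
      = ν ^ 2 - 2 * ν * (Matrix.trace Sig / k) + Matrix.trace (Sigᵀ * Sig) / k := by
  have hk0 : (k : ℝ) ≠ 0 := Nat.cast_ne_zero.2 hk.ne'
  have h1 : Matrix.trace ((ν • (1 : Matrix (Fin k) (Fin k) ℝ) - Sig)ᵀ *
      (ν • (1 : Matrix (Fin k) (Fin k) ℝ) - Sig))
      = ν ^ 2 * k - 2 * ν * Matrix.trace Sig + Matrix.trace (Sigᵀ * Sig) := by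
    simp [transpose_sub, transpose_smul, transpose_one, Matrix.sub_mul, Matrix.mul_sub,
      smul_mul_assoc, mul_smul_comm, trace_sub, trace_smul, trace_one,
      Matrix.trace_transpose, smul_smul]
    ring
  unfold nFrobSq
  rw [h1]
  field_simp

/-- optimality of the linear shrinkage coefficients. -/
theorem stmt16 {k : ℕ} (hk : 0 < k) (Sig : Matrix (Fin k) (Fin k) ℝ)
    (β2 : ℝ) (hβ2 : 0 < β2)
    (νstar α2 δ2 ρstar : ℝ)
    (hν : νstar = Matrix.trace Sig / k)
    (hα : α2 = nFrobSq (νstar • (1 : Matrix (Fin k) (Fin k) ℝ) - Sig))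
    (hδ : δ2 = α2 + β2) (hρ : ρstar = β2 / δ2) :
    (∀ ρ ν : ℝ,
      ρstar ^ 2 * nFrobSq (νstar • (1 : Matrix (Fin k) (Fin k) ℝ) - Sig) + (1 - ρstar) ^ 2 * β2
        ≤ ρ ^ 2 * nFrobSq (ν • (1 : Matrix (Fin k) (Fin k) ℝ) - Sig) + (1 - ρ) ^ 2 * β2) ∧
    (ρstar ^ 2 * nFrobSq (νstar • (1 : Matrix (Fin k) (Fin k) ℝ) - Sig) + (1 - ρstar) ^ 2 * β2
        = α2 * β2 / δ2) ∧
    (0 < α2 → ∀ ρ ν : ℝ,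
      ρ ^ 2 * nFrobSq (ν • (1 : Matrix (Fin k) (Fin k) ℝ) - Sig) + (1 - ρ) ^ 2 * β2
          = α2 * β2 / δ2 →
      ρ = ρstar ∧ ν = νstar) := by
  have hα2 : 0 ≤ α2 := hα ▸ nFrobSq_nonneg _
  have hδ0 : 0 < δ2 := by rw [hδ]; linarith
  have hρ0 : 0 < ρstar := by rw [hρ]; positivity
  have hkey : ∀ ν : ℝ,
      nFrobSq (ν • (1 : Matrix (Fin k) (Fin k) ℝ) - Sig) = (ν - νstar) ^ 2 + α2 := by
    intro ν
    rw [key hk Sig ν, hα, key hk Sig νstar, hν]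
    ring
  have hid : ∀ ρ : ℝ, ρ ^ 2 * α2 + (1 - ρ) ^ 2 * β2
      = δ2 * (ρ - ρstar) ^ 2 + α2 * β2 / δ2 := by
    intro ρ
    rw [hρ]
    field_simp
    rw [hδ]
    ring
  have hmin : ρstar ^ 2 * nFrobSq (νstar • (1 : Matrix (Fin k) (Fin k) ℝ) - Sig)
      + (1 - ρstar) ^ 2 * β2 = α2 * β2 / δ2 := by
    rw [hkey]; linear_combination hid ρstar
  refine ⟨?_, hmin, ?_⟩
  · intro ρ ν
    rw [hmin, hkey]
    have h1 := hid ρ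
    nlinarith [sq_nonneg (ρ - ρstar), sq_nonneg (ν - νstar), sq_nonneg ρ, mul_nonneg (sq_nonneg ρ) (sq_nonneg (ν - νstar))]
  · intro hα2' ρ ν heq
    rw [hkey ν] at heq
    have h1 := hid ρ
    have hsum : ρ ^ 2 * (ν - νstar) ^ 2 + δ2 * (ρ - ρstar) ^ 2 = 0 := by
      linear_combination heq - h1
    have e1 : δ2 * (ρ - ρstar) ^ 2 = 0 := by
      have hnn : 0 ≤ ρ ^ 2 * (ν - νstar) ^ 2 := by positivity
      have hnn2 : 0 ≤ δ2 * (ρ - ρstar) ^ 2 := by positivity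
      linarith
    have hρeq : ρ = ρstar := by
      have h2 := (mul_eq_zero.1 e1).resolve_left hδ0.ne'
      have := (pow_eq_zero_iff two_ne_zero).1 h2
      exact sub_eq_zero.1 this
    refine ⟨hρeq, ?_⟩
    have e2 : ρ ^ 2 * (ν - νstar) ^ 2 = 0 := by linarith
    have hρne : ρ ^ 2 ≠ 0 := by
      rw [hρeq]; positivity
    have h3 := (mul_eq_zero.1 e2).resolve_left hρne
    have := (pow_eq_zero_iff two_ne_zero).1 h3
    linarith [sub_eq_zero.1 this]
end
end

section
/- In the setting of the programs (P_nl) and (P̂_nl), assume condition (A2), (A3): (P_nl) has a unique optimal solution x*, (A4): LICQ and SC hold at x* with (unique) multipliers γ* ∈ ℝ^{r_C}, and (A6): max{‖T̂_n − T‖₂, ‖Ĉ_n − C‖_F, ‖d̂_n − d‖₂} = O_P(n^{-1/2}). Let γ̂_n ∈ ℝ^{r_C} be KKT multipliers of (P̂_nl) at x̂_n (which exist since the constraints are linear). Then ‖γ̂_n − γ*‖₂ = O_P( ‖x̂_n − x*‖₂ + n^{-1/2} ). -/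
open MeasureTheory Filter

noncomputable section

/-- Euclidean (L²) norm on `ℝ^k`. -/
def eucNorm {k : ℕ} (v : Fin k → ℝ) : ℝ := Real.sqrt (∑ i, v i ^ 2)

/-- Frobenius norm. -/
def frobNorm {m k : ℕ} (M : Fin m → Fin k → ℝ) : ℝ :=
  Real.sqrt (∑ i, ∑ j, M i j ^ 2)

/-- `R n = O_P(S n)`. -/
def IsBigOP {Ω : Type*} [MeasurableSpace Ω] (P : Measure Ω) (R S : ℕ → Ω → ℝ) : Prop :=
  ∀ ε : ℝ, 0 < ε → ∃ M : ℝ, 0 < M ∧ ∃ N : ℕ, ∀ n ≥ N,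
    P {ω | M * S n ω < R n ω} < ENNReal.ofReal ε


/-!
LICQ at `x*` makes `γ ↦ γᵀC` injective on vectors supported on the active set, so
`‖γ̂ - γ*‖ ≲ ‖(γ̂ - γ*)ᵀC‖`, and by stationarity `(γ̂ - γ*)ᵀC = ∇f(x*, T) - ∇f(x̂, T̂) + γ̂ᵀ(C - Ĉ)`
is `O(‖x̂ - x*‖ + ‖T̂ - T‖ + ‖γ̂‖ ‖Ĉ - C‖)`. Two facts make this work. Near `x*` and `(C, d)`,
constraints inactive at `x*` stay inactive, so `γ̂ - γ*` is supported on the active set. And KKT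
multipliers are bounded uniformly over `𝕏` and small perturbations of `(C, d)`: a nonzero `γ ≥ 0`
with `γᵀC = 0` complementary to some `x` pairs with `Cx* - d ≤ 0` to a vanishing sum of
nonpositive terms, so it lives on the active set at `x*` and LICQ kills it; compactness of
`𝕏 × {γ ≥ 0, ‖γ‖ = 1}` makes this quantitative. The bound also covers `x̂` far from `x*`. The
deterministic estimate then holds on the event `{data error ≤ M₀ / √n}`.
-/

open Matrix Topology

theorem LinearIndependent.exists_norm_le_mul_norm_sum_smul {ι E : Type*} [Fintype ι]
    [NormedAddCommGroup E] [NormedSpace ℝ E] {v : ι → E} {p : ι → Prop} [DecidablePred p]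
    (hv : LinearIndependent ℝ (fun j : {j // p j} => v j)) :
    ∃ K ≥ 0, ∀ μ : ι → ℝ, (∀ j, ¬ p j → μ j = 0) → ‖μ‖ ≤ K * ‖∑ j, μ j • v j‖ := by
  obtain ⟨K, -, hK⟩ :=
    (Fintype.linearCombination ℝ fun j : {j // p j} => v j).exists_antilipschitzWith
      (LinearMap.ker_eq_bot.2 (linearIndependent_iff_injective_fintypeLinearCombination.1 hv))
  refine ⟨K, K.2, fun μ hμ => ?_⟩
  have hsum : Fintype.linearCombination ℝ (fun j : {j // p j} => v j) (fun j => μ j) =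
      ∑ j, μ j • v j := by
    rw [Fintype.linearCombination_apply, ← Fintype.sum_subtype_add_sum_subtype p,
      Fintype.sum_eq_zero (fun j : {j // ¬ p j} => μ j • v j) fun j => by simp [hμ j j.2], add_zero]
  have hnorm : ‖μ‖ ≤ ‖fun j : {j // p j} => μ j‖ := by
    refine (pi_norm_le_iff_of_nonneg (norm_nonneg _)).2 fun j => ?_
    by_cases hj : p j
    · exact norm_le_pi_norm (fun j : {j // p j} => μ j) ⟨j, hj⟩
    · simp [hμ j hj]
  have hanti := hK.le_mul_dist (fun j => μ j) 0
  rw [dist_zero_right, map_zero, dist_zero_right, hsum] at hanti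
  exact hnorm.trans hanti

theorem IsCompact.exists_pos_eventually_forall_le {X Y : Type*} [TopologicalSpace X]
    [TopologicalSpace Y] {K : Set Y} (hK : IsCompact K) {φ : X × Y → ℝ} (hφ : Continuous φ)
    {x₀ : X} (hpos : ∀ y ∈ K, 0 < φ (x₀, y)) :
    ∃ c > 0, ∀ᶠ x in 𝓝 x₀, ∀ y ∈ K, c ≤ φ (x, y) := by
  obtain ⟨c, hc, hcle⟩ :=
    hK.exists_forall_le' (hφ.comp (Continuous.prodMk_right x₀)).continuousOn hpos
  refine ⟨c / 2, half_pos hc, hK.eventually_forall_of_forall_eventually fun y hy => ?_⟩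
  have hcy : c ≤ φ (x₀, y) := hcle y hy
  exact ((hφ.tendsto (x₀, y)).eventually_const_lt (by linarith)).mono fun _ h => h.le

section Multipliers

-- Matrices are plain functions `m → n → ℝ` here, so `‖C‖` is the entrywise sup norm.
variable {m n : Type*} [Fintype m] [Fintype n]

theorem Matrix.norm_vecMul_le (v : m → ℝ) (M : m → n → ℝ) :
    ‖v ᵥ* M‖ ≤ Fintype.card m * ‖v‖ * ‖M‖ := by
  refine (pi_norm_le_iff_of_nonneg (by positivity)).2 fun i => ?_
  calc ‖∑ j, v j * M j i‖ ≤ ∑ j, ‖v j‖ * ‖M j i‖ := (norm_sum_le _ _).trans_eq (by simp)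
    _ ≤ ∑ _j : m, ‖v‖ * ‖M‖ := Finset.sum_le_sum fun j _ => mul_le_mul (norm_le_pi_norm v j)
        ((norm_le_pi_norm (M j) i).trans (norm_le_pi_norm M j)) (norm_nonneg _) (norm_nonneg _)
    _ = Fintype.card m * ‖v‖ * ‖M‖ := by simp [mul_assoc]

variable {C : m → n → ℝ} {d : m → ℝ} {x₀ : n → ℝ}

theorem exists_norm_le_mul_norm_vecMul_of_licq
    (hLICQ : LinearIndependent ℝ (fun j : {j // (C *ᵥ x₀) j = d j} => C j)) :
    ∃ K ≥ 0, ∀ μ : m → ℝ, (∀ j, (C *ᵥ x₀) j ≠ d j → μ j = 0) → ‖μ‖ ≤ K * ‖μ ᵥ* C‖ := by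
  classical
  obtain ⟨K, hK0, hK⟩ := hLICQ.exists_norm_le_mul_norm_sum_smul
  exact ⟨K, hK0, fun μ hμ => by rw [vecMul_eq_sum μ C]; exact hK μ hμ⟩

theorem eq_zero_of_vecMul_eq_zero_of_licq (hfeas : C *ᵥ x₀ ≤ d)
    (hLICQ : LinearIndependent ℝ (fun j : {j // (C *ᵥ x₀) j = d j} => C j))
    {γ : m → ℝ} (hγ : 0 ≤ γ) (hγC : γ ᵥ* C = 0) {x : n → ℝ}
    (hcompl : ∀ j, γ j * ((C *ᵥ x) j - d j) = 0) : γ = 0 := by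
  have hslack : ∑ j, γ j * ((C *ᵥ x₀) j - d j) = 0 := by
    calc ∑ j, γ j * ((C *ᵥ x₀) j - d j) = γ ⬝ᵥ (C *ᵥ x₀ - d) := rfl
      _ = γ ⬝ᵥ (C *ᵥ x - d) := by
          rw [dotProduct_sub, dotProduct_sub, dotProduct_mulVec γ C, dotProduct_mulVec γ C, hγC,
            zero_dotProduct, zero_dotProduct]
      _ = 0 := Finset.sum_eq_zero fun j _ => hcompl j
  have hsupp : ∀ j, (C *ᵥ x₀) j ≠ d j → γ j = 0 := fun j hj =>
    (mul_eq_zero.1 ((Finset.sum_eq_zero_iff_of_nonpos fun j _ =>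
      mul_nonpos_of_nonneg_of_nonpos (hγ j) (sub_nonpos.2 (hfeas j))).1 hslack j
        (Finset.mem_univ j))).resolve_right (sub_ne_zero.2 hj)
  obtain ⟨K, -, hK⟩ := exists_norm_le_mul_norm_vecMul_of_licq hLICQ
  simpa [hγC] using hK γ hsupp

theorem exists_pos_mul_norm_le_norm_vecMul {𝕏 : Set (n → ℝ)} (h𝕏 : IsCompact 𝕏)
    (hfeas : C *ᵥ x₀ ≤ d)
    (hLICQ : LinearIndependent ℝ (fun j : {j // (C *ᵥ x₀) j = d j} => C j)) :
    ∃ c > 0, ∃ ε > 0, ∀ (C' : m → n → ℝ) (d' : m → ℝ), ‖C' - C‖ < ε → ‖d' - d‖ < ε →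
      ∀ γ : m → ℝ, 0 ≤ γ → ∀ x ∈ 𝕏, (∀ j, γ j * ((C' *ᵥ x) j - d' j) = 0) →
        c * ‖γ‖ ≤ ‖γ ᵥ* C'‖ := by
  set φ : ((m → n → ℝ) × (m → ℝ)) × ((m → ℝ) × (n → ℝ)) → ℝ := fun z =>
    ‖z.2.1 ᵥ* z.1.1‖ + ∑ j, |z.2.1 j * ((z.1.1 *ᵥ z.2.2) j - z.1.2 j)|
  have hφ : Continuous φ := by fun_prop
  have hK : IsCompact ((Set.Ici (0 : m → ℝ) ∩ Metric.sphere 0 1) ×ˢ 𝕏) :=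
    ((isCompact_sphere 0 1).inter_left isClosed_Ici).prod h𝕏
  obtain ⟨c, hc, hev⟩ := hK.exists_pos_eventually_forall_le hφ (x₀ := (C, d)) <| by
    rintro ⟨γ, x⟩ ⟨⟨hγ, hγ1⟩, -⟩
    by_contra! hφ0
    change ‖γ ᵥ* C‖ + ∑ j, |γ j * ((C *ᵥ x) j - d j)| ≤ 0 at hφ0
    have hslack : 0 ≤ ∑ j, |γ j * ((C *ᵥ x) j - d j)| := by positivity
    have hγC : γ ᵥ* C = 0 := norm_eq_zero.1 (le_antisymm (by linarith) (norm_nonneg _))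
    have hslack0 : ∑ j, |γ j * ((C *ᵥ x) j - d j)| = 0 := by
      linarith [norm_nonneg (γ ᵥ* C)]
    have hcompl : ∀ j, γ j * ((C *ᵥ x) j - d j) = 0 := fun j => abs_eq_zero.1 <|
      (Finset.sum_eq_zero_iff_of_nonneg fun j _ => abs_nonneg _).1 hslack0 j (Finset.mem_univ j)
    have := eq_zero_of_vecMul_eq_zero_of_licq hfeas hLICQ hγ hγC hcompl
    simp_all
  obtain ⟨ε, hε, hev⟩ := Metric.eventually_nhds_iff.1 hev
  refine ⟨c, hc, ε, hε, fun C' d' hC hd γ hγ x hx hcompl => ?_⟩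
  rcases eq_or_ne γ 0 with rfl | hγ0
  · simp
  have hγpos : 0 < ‖γ‖ := norm_pos_iff.2 hγ0
  have hφγ := hev (y := (C', d'))
    (by rw [Prod.dist_eq, dist_eq_norm C' C, dist_eq_norm d' d]; exact max_lt hC hd)
    (‖γ‖⁻¹ • γ, x) ⟨⟨smul_nonneg (by positivity) hγ, by simp [norm_smul, hγ0]⟩, hx⟩
  simp only [φ, Pi.smul_apply, smul_eq_mul, mul_assoc, hcompl, mul_zero, abs_zero,
    Finset.sum_const_zero, add_zero] at hφγ
  rw [smul_vecMul ‖γ‖⁻¹ γ C', norm_smul, norm_inv, norm_norm] at hφγ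
  rw [mul_comm]
  exact (le_inv_mul_iff₀ hγpos).1 hφγ

theorem eventually_mulVec_lt_of_mulVec_lt (C : m → n → ℝ) (d : m → ℝ) (x₀ : n → ℝ) :
    ∀ᶠ p : ((m → n → ℝ) × (m → ℝ)) × (n → ℝ) in 𝓝 ((C, d), x₀),
      ∀ j, (C *ᵥ x₀) j < d j → (p.1.1 *ᵥ p.2) j < p.1.2 j := by
  refine Filter.eventually_all.2 fun j => ?_
  by_cases hj : (C *ᵥ x₀) j < d j
  · refine (ContinuousAt.eventually_lt (f := fun p : ((m → n → ℝ) × (m → ℝ)) × (n → ℝ) =>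
      (p.1.1 *ᵥ p.2) j) (g := fun p => p.1.2 j) ?_ ?_ hj).mono fun _ h _ => h <;> fun_prop
  · exact Eventually.of_forall fun _ h => absurd h hj

theorem norm_multiplier_sub_le_of_inactive {K : ℝ} (hK0 : 0 ≤ K)
    (hK : ∀ μ : m → ℝ, (∀ j, (C *ᵥ x₀) j ≠ d j → μ j = 0) → ‖μ‖ ≤ K * ‖μ ᵥ* C‖)
    (hfeas : C *ᵥ x₀ ≤ d) {g₀ : n → ℝ} {γ₀ : m → ℝ} (hstat : g₀ + γ₀ ᵥ* C = 0)
    (hcompl : ∀ j, γ₀ j * ((C *ᵥ x₀) j - d j) = 0)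
    {C' : m → n → ℝ} {d' : m → ℝ} {x' g' : n → ℝ} {γ' : m → ℝ} (hstat' : g' + γ' ᵥ* C' = 0)
    (hcompl' : ∀ j, γ' j * ((C' *ᵥ x') j - d' j) = 0)
    (hinactive : ∀ j, (C *ᵥ x₀) j < d j → (C' *ᵥ x') j < d' j) :
    ‖γ' - γ₀‖ ≤ K * (‖g' - g₀‖ + Fintype.card m * ‖γ'‖ * ‖C' - C‖) := by
  have hsupp : ∀ j, (C *ᵥ x₀) j ≠ d j → (γ' - γ₀) j = 0 := fun j hj => by
    have hlt := lt_of_le_of_ne (hfeas j) hj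
    rw [Pi.sub_apply, (mul_eq_zero.1 (hcompl' j)).resolve_right (sub_neg.2 (hinactive j hlt)).ne,
      (mul_eq_zero.1 (hcompl j)).resolve_right (sub_neg.2 hlt).ne, sub_zero]
  have hvecMul : (γ' - γ₀) ᵥ* C = -(g' - g₀) - γ' ᵥ* (C' - C) := by
    ext i
    have h₀ := congrFun hstat i
    have h' := congrFun hstat' i
    simp only [vecMul, dotProduct, Pi.add_apply, Pi.sub_apply, Pi.neg_apply, Pi.zero_apply,
      sub_mul, mul_sub, Finset.sum_sub_distrib] at h₀ h' ⊢
    linarith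
  calc ‖γ' - γ₀‖ ≤ K * ‖(γ' - γ₀) ᵥ* C‖ := hK _ hsupp
    _ ≤ K * (‖g' - g₀‖ + Fintype.card m * ‖γ'‖ * ‖C' - C‖) := by
      rw [hvecMul]
      exact mul_le_mul_of_nonneg_left ((norm_sub_le _ _).trans
        (by rw [norm_neg]; gcongr; exact norm_vecMul_le _ _)) hK0

theorem exists_norm_multiplier_sub_le_of_near
    (hfeas : C *ᵥ x₀ ≤ d)
    (hLICQ : LinearIndependent ℝ (fun j : {j // (C *ᵥ x₀) j = d j} => C j))
    {g₀ : n → ℝ} {γ₀ : m → ℝ} (hstat : g₀ + γ₀ ᵥ* C = 0)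
    (hcompl : ∀ j, γ₀ j * ((C *ᵥ x₀) j - d j) = 0) :
    ∃ K ≥ 0, ∃ ε > 0, ∀ (C' : m → n → ℝ) (d' : m → ℝ) (x' g' : n → ℝ) (γ' : m → ℝ),
      ‖C' - C‖ < ε → ‖d' - d‖ < ε → ‖x' - x₀‖ < ε → g' + γ' ᵥ* C' = 0 →
      (∀ j, γ' j * ((C' *ᵥ x') j - d' j) = 0) →
      ‖γ' - γ₀‖ ≤ K * (‖g' - g₀‖ + Fintype.card m * ‖γ'‖ * ‖C' - C‖) := by
  obtain ⟨K, hK0, hK⟩ := exists_norm_le_mul_norm_vecMul_of_licq hLICQ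
  obtain ⟨ε, hε, hinactive⟩ :=
    Metric.eventually_nhds_iff.1 (eventually_mulVec_lt_of_mulVec_lt C d x₀)
  refine ⟨K, hK0, ε, hε, fun C' d' x' g' γ' hC hd hx hstat' hcompl' =>
    norm_multiplier_sub_le_of_inactive hK0 hK hfeas hstat hcompl hstat' hcompl' ?_⟩
  refine hinactive (y := ((C', d'), x')) ?_
  rw [Prod.dist_eq, Prod.dist_eq, dist_eq_norm C' C, dist_eq_norm d' d, dist_eq_norm x' x₀]
  exact max_lt (max_lt hC hd) hx

theorem exists_norm_multiplier_sub_le {𝕏 : Set (n → ℝ)} (h𝕏 : IsCompact 𝕏)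
    (hfeas : C *ᵥ x₀ ≤ d)
    (hLICQ : LinearIndependent ℝ (fun j : {j // (C *ᵥ x₀) j = d j} => C j))
    {g₀ : n → ℝ} {γ₀ : m → ℝ} (hstat : g₀ + γ₀ ᵥ* C = 0)
    (hcompl : ∀ j, γ₀ j * ((C *ᵥ x₀) j - d j) = 0) {L : ℝ} (hL : 0 ≤ L) :
    ∃ η > 0, ∃ M ≥ 0, ∀ (C' : m → n → ℝ) (d' : m → ℝ) (x' g' : n → ℝ) (γ' : m → ℝ) (e : ℝ),
      e ≤ η → ‖C' - C‖ ≤ e → ‖d' - d‖ ≤ e → x' ∈ 𝕏 → 0 ≤ γ' → g' + γ' ᵥ* C' = 0 →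
      (∀ j, γ' j * ((C' *ᵥ x') j - d' j) = 0) → ‖g' - g₀‖ ≤ L * (‖x' - x₀‖ + e) →
      ‖γ' - γ₀‖ ≤ M * (‖x' - x₀‖ + e) := by
  obtain ⟨K, hK0, ε₁, hε₁, hnear⟩ := exists_norm_multiplier_sub_le_of_near hfeas hLICQ hstat hcompl
  obtain ⟨c, hc, ε₂, hε₂, hmass⟩ := exists_pos_mul_norm_le_norm_vecMul h𝕏 hfeas hLICQ
  obtain ⟨R, hR⟩ := h𝕏.isBounded.subset_closedBall x₀
  replace hR := hR.trans (Metric.closedBall_subset_closedBall (le_max_left R 0))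
  set B := (‖g₀‖ + L * (max R 0 + 1)) / c
  set δ := min ε₁ ε₂ / 2
  have hB : 0 ≤ B := by positivity
  have hδ : 0 < δ := by positivity
  have hδε : δ < min ε₁ ε₂ := half_lt_self (lt_min hε₁ hε₂)
  refine ⟨min 1 δ, by positivity, K * (L + Fintype.card m * B) + (B + ‖γ₀‖) / δ, by positivity,
    fun C' d' x' g' γ' e he hC hd hx hγ hstat' hcompl' hg => ?_⟩
  set u := ‖x' - x₀‖
  have he0 : 0 ≤ e := (norm_nonneg _).trans hC
  have hu0 : 0 ≤ u := norm_nonneg _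
  have heδ : e ≤ δ := he.trans (min_le_right 1 δ)
  have hγB : ‖γ'‖ ≤ B := by
    have hg' : ‖g'‖ ≤ ‖g₀‖ + L * (max R 0 + 1) := by
      have hu : u ≤ max R 0 := mem_closedBall_iff_norm.1 (hR hx)
      calc ‖g'‖ ≤ ‖g₀‖ + ‖g' - g₀‖ := norm_le_norm_add_norm_sub' g' g₀
        _ ≤ ‖g₀‖ + L * (max R 0 + 1) := by
          gcongr; exact hg.trans (by gcongr; linarith [min_le_left 1 δ])
    have hγg := hmass C' d' (by linarith [min_le_right ε₁ ε₂]) (by linarith [min_le_right ε₁ ε₂])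
      γ' hγ x' hx hcompl'
    rw [show γ' ᵥ* C' = -g' by linear_combination hstat', norm_neg] at hγg
    rw [le_div_iff₀ hc]
    linarith
  by_cases hux : u < δ
  · calc ‖γ' - γ₀‖ ≤ K * (‖g' - g₀‖ + Fintype.card m * ‖γ'‖ * ‖C' - C‖) :=
          hnear C' d' x' g' γ' (by linarith [min_le_left ε₁ ε₂]) (by linarith [min_le_left ε₁ ε₂])
            (by linarith [min_le_left ε₁ ε₂]) hstat' hcompl'
      _ ≤ K * (L * (u + e) + Fintype.card m * B * (u + e)) := by gcongr; linarith
      _ ≤ _ := by nlinarith [mul_nonneg (by positivity : 0 ≤ (B + ‖γ₀‖) / δ) (add_nonneg hu0 he0)]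
  · calc ‖γ' - γ₀‖ ≤ B + ‖γ₀‖ := (norm_sub_le _ _).trans (by gcongr)
      _ ≤ (B + ‖γ₀‖) / δ * u := by
          rw [div_mul_eq_mul_div, le_div_iff₀ hδ]
          exact mul_le_mul_of_nonneg_left (not_lt.1 hux) (by positivity)
      _ ≤ _ := by
          have hKLB : 0 ≤ K * (L + Fintype.card m * B) := by positivity
          nlinarith [mul_nonneg hKLB (add_nonneg hu0 he0),
            mul_nonneg (by positivity : 0 ≤ (B + ‖γ₀‖) / δ) he0]

end Multipliers

theorem ContDiff.exists_norm_sub_le_of_isCompact {E F G : Type*} [NormedAddCommGroup E]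
    [NormedSpace ℝ E] [NormedAddCommGroup F] [NormedSpace ℝ F] [ProperSpace F]
    [NormedAddCommGroup G] [NormedSpace ℝ G] {g : E × F → G} (hg : ContDiff ℝ 1 g) {K : Set E}
    (hK : IsCompact K) (θ₀ : F) :
    ∃ L ≥ 0, ∀ x ∈ K, ∀ y ∈ K, ∀ θ, ‖θ - θ₀‖ ≤ 1 →
      ‖g (x, θ) - g (y, θ₀)‖ ≤ L * (‖x - y‖ + ‖θ - θ₀‖) := by
  obtain ⟨L, hL⟩ := hg.locallyLipschitz.locallyLipschitzOn.exists_lipschitzOnWith_of_compact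
    (hK.prod (isCompact_closedBall θ₀ 1))
  refine ⟨L, L.2, fun x hx y hy θ hθ => ?_⟩
  have hmem : ∀ z ∈ K, ∀ φ, ‖φ - θ₀‖ ≤ 1 → (z, φ) ∈ K ×ˢ Metric.closedBall θ₀ 1 :=
    fun z hz φ hφ => ⟨hz, mem_closedBall_iff_norm.2 hφ⟩
  calc ‖g (x, θ) - g (y, θ₀)‖ ≤ L * ‖(x, θ) - (y, θ₀)‖ := by
        rw [← dist_eq_norm, ← dist_eq_norm]
        exact hL.dist_le_mul _ (hmem x hx θ hθ) _ (hmem y hy θ₀ (by simp))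
    _ ≤ L * (‖x - y‖ + ‖θ - θ₀‖) := by
        gcongr
        exact max_le_add_of_nonneg (norm_nonneg _) (norm_nonneg _)

theorem fderiv_apply_eq_fderiv_uncurry {E F : Type*} [NormedAddCommGroup E] [NormedSpace ℝ E]
    [NormedAddCommGroup F] [NormedSpace ℝ F] {f : E → F → ℝ}
    (hf : Differentiable ℝ (fun p : E × F => f p.1 p.2)) (x : E) (θ : F) (v : E) :
    fderiv ℝ (fun y => f y θ) x v = fderiv ℝ (fun p : E × F => f p.1 p.2) (x, θ) (v, 0) := by
  set ι : E →L[ℝ] E × F := (ContinuousLinearMap.id ℝ E).prod 0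
  have hι : HasFDerivAt (fun y => (y, θ)) ι x := (hasFDerivAt_id x).prodMk (hasFDerivAt_const θ x)
  have hcomp : HasFDerivAt (fun y => f y θ)
      ((fderiv ℝ (fun p : E × F => f p.1 p.2) (x, θ)).comp ι) x :=
    (hf (x, θ)).hasFDerivAt.comp (g := fun p : E × F => f p.1 p.2) x hι
  rw [hcomp.fderiv]
  simp [ι]

def partialGradient {ι F : Type*} [DecidableEq ι] (f : (ι → ℝ) → F → ℝ) (x : ι → ℝ) (θ : F) :
    ι → ℝ :=
  fun i => fderiv ℝ (fun y => f y θ) x (Pi.single i 1)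

theorem contDiff_partialGradient {ι F : Type*} [Fintype ι] [DecidableEq ι] [NormedAddCommGroup F]
    [NormedSpace ℝ F] {f : (ι → ℝ) → F → ℝ} (hf : ContDiff ℝ 2 (fun p : (ι → ℝ) × F => f p.1 p.2)) :
    ContDiff ℝ 1 (fun p : (ι → ℝ) × F => partialGradient f p.1 p.2) := by
  unfold partialGradient
  simp only [fderiv_apply_eq_fderiv_uncurry (hf.differentiable (by norm_num))]
  exact contDiff_pi.2 fun i => (hf.fderiv_right (by norm_num)).clm_apply contDiff_const

theorem norm_le_eucNorm {k : ℕ} (v : Fin k → ℝ) : ‖v‖ ≤ eucNorm v :=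
  (pi_norm_le_iff_of_nonneg (Real.sqrt_nonneg _)).2 fun i =>
    Real.abs_le_sqrt (Finset.single_le_sum (fun j _ => sq_nonneg (v j)) (Finset.mem_univ i))

theorem eucNorm_le_sqrt_mul_norm {k : ℕ} (v : Fin k → ℝ) : eucNorm v ≤ Real.sqrt k * ‖v‖ := by
  rw [eucNorm, ← Real.sqrt_sq (norm_nonneg v), ← Real.sqrt_mul (Nat.cast_nonneg k)]
  refine Real.sqrt_le_sqrt ?_
  calc ∑ i, v i ^ 2 ≤ ∑ _i : Fin k, ‖v‖ ^ 2 := Finset.sum_le_sum fun i _ =>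
        sq_le_sq' (abs_le.1 (norm_le_pi_norm v i)).1 (abs_le.1 (norm_le_pi_norm v i)).2
    _ = k * ‖v‖ ^ 2 := by simp

theorem norm_le_frobNorm {m k : ℕ} (M : Fin m → Fin k → ℝ) : ‖M‖ ≤ frobNorm M :=
  (pi_norm_le_iff_of_nonneg (Real.sqrt_nonneg _)).2 fun i =>
    (pi_norm_le_iff_of_nonneg (Real.sqrt_nonneg _)).2 fun j => Real.abs_le_sqrt <|
      (Finset.single_le_sum (fun j _ => sq_nonneg (M i j)) (Finset.mem_univ j)).trans <|
        Finset.single_le_sum (f := fun i => ∑ j, M i j ^ 2)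
          (fun _ _ => Finset.sum_nonneg fun _ _ => sq_nonneg _) (Finset.mem_univ i)

theorem IsBigOP.of_le_of_tendsto {Ω : Type*} [MeasurableSpace Ω] {P : Measure Ω}
    {D R A : ℕ → Ω → ℝ} {s : ℕ → ℝ} (hD : IsBigOP P D (fun n _ => s n))
    (hs : Tendsto s atTop (𝓝 0)) (hs0 : ∀ n, 0 ≤ s n) (hA : ∀ n ω, 0 ≤ A n ω) {η M : ℝ}
    (hη : 0 < η) (hM : 0 ≤ M) (hR : ∀ n ω, D n ω ≤ η → R n ω ≤ M * (A n ω + D n ω)) :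
    IsBigOP P R (fun n ω => A n ω + s n) := by
  intro ε hε
  obtain ⟨M₀, hM₀, N₀, hN₀⟩ := hD ε hε
  obtain ⟨N₁, hN₁⟩ := eventually_atTop.1 (hs.eventually (gt_mem_nhds (div_pos hη hM₀)))
  refine ⟨M * (1 + M₀) + 1, by positivity, max N₀ N₁, fun n hn =>
    (measure_mono fun ω hω => ?_).trans_lt (hN₀ n (le_of_max_le_left hn))⟩
  by_contra hsmall
  have hDs : D n ω ≤ M₀ * s n := not_lt.1 hsmall
  have hsη : M₀ * s n ≤ η := by
    have := hN₁ n (le_of_max_le_right hn)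
    rw [lt_div_iff₀ hM₀] at this
    linarith
  have hRle : R n ω ≤ (M * (1 + M₀) + 1) * (A n ω + s n) :=
    calc R n ω ≤ M * (A n ω + D n ω) := hR n ω (hDs.trans hsη)
      _ ≤ M * (A n ω + M₀ * s n) := by gcongr
      _ ≤ (M * (1 + M₀) + 1) * (A n ω + s n) := by
        nlinarith [hA n ω, hs0 n, mul_nonneg hM (hA n ω), mul_nonneg hM (hs0 n),
          mul_nonneg (mul_nonneg hM hM₀.le) (hA n ω)]
  exact (not_lt.2 hRle) hω

theorem tendsto_inv_sqrt_natCast_atTop : Tendsto (fun n : ℕ => (Real.sqrt n)⁻¹) atTop (𝓝 0) :=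
  tendsto_inv_atTop_zero.comp (Real.tendsto_sqrt_atTop.comp tendsto_natCast_atTop_atTop)

theorem stmt17_general {Ω : Type*} [MeasurableSpace Ω] (P : Measure Ω)
    {k dT rC : ℕ}
    -- the true program (P_nl)
    (𝕏 : Set (Fin k → ℝ)) (h𝕏c : IsCompact 𝕏)
    (T : Fin dT → ℝ)
    (f : (Fin k → ℝ) → (Fin dT → ℝ) → ℝ)
    (hf : ContDiff ℝ 2 (fun p : (Fin k → ℝ) × (Fin dT → ℝ) => f p.1 p.2))
    (C : Fin rC → Fin k → ℝ) (d : Fin rC → ℝ)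
    (Slin : Set (Fin k → ℝ))
    (hSlin : Slin = {x ∈ 𝕏 | ∀ j, ∑ i, C j i * x i ≤ d j})
    (sol : Set (Fin k → ℝ))
    (hsol : sol = {x ∈ Slin | ∀ y ∈ Slin, f x T ≤ f y T})
    -- (A3): unique optimal solution x*
    (xstar : Fin k → ℝ) (hA3 : sol = {xstar})
    -- (A4): LICQ and SC at x* with multipliers γ*
    (γstar : Fin rC → ℝ)
    (hLICQ : LinearIndependent ℝ
      (fun j : {j : Fin rC // ∑ i, C j i * xstar i = d j} => C j.1))
    (hstat : ∀ i, (fderiv ℝ (fun x' => f x' T) xstar) (Pi.single i 1)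
        + ∑ j, γstar j * C j i = 0)
    (hcompl : ∀ j, γstar j * ((∑ i, C j i * xstar i) - d j) = 0)
    -- the approximating programs (P̂_nl)
    (That : ℕ → Ω → Fin dT → ℝ) (Chat : ℕ → Ω → Fin rC → Fin k → ℝ)
    (dhat : ℕ → Ω → Fin rC → ℝ) (xhat : ℕ → Ω → Fin k → ℝ)
    (hfeas : ∀ n ω, xhat n ω ∈ 𝕏 ∧ ∀ j, ∑ i, Chat n ω j i * xhat n ω i ≤ dhat n ω j)
    -- (A6): √n-consistency of the estimated program data
    (hA6 : IsBigOP P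
      (fun n ω =>
        max (eucNorm (That n ω - T)) (max (frobNorm (Chat n ω - C)) (eucNorm (dhat n ω - d))))
      (fun n _ => (Real.sqrt n)⁻¹))
    -- KKT multipliers of the approximating program at x̂
    (γhat : ℕ → Ω → Fin rC → ℝ)
    (hγhatnonneg : ∀ n ω j, 0 ≤ γhat n ω j)
    (hstathat : ∀ n ω i, (fderiv ℝ (fun x' => f x' (That n ω)) (xhat n ω)) (Pi.single i 1)
        + ∑ j, γhat n ω j * Chat n ω j i = 0)
    (hcomplhat : ∀ n ω j,
      γhat n ω j * ((∑ i, Chat n ω j i * xhat n ω i) - dhat n ω j) = 0) :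
    IsBigOP P (fun n ω => eucNorm (γhat n ω - γstar))
      (fun n ω => eucNorm (xhat n ω - xstar) + (Real.sqrt n)⁻¹) := by
  have hxstar : xstar ∈ 𝕏 ∧ ∀ j, ∑ i, C j i * xstar i ≤ d j := by
    have h : xstar ∈ sol := hA3 ▸ rfl
    rw [hsol, hSlin] at h
    exact h.1
  obtain ⟨L, hL0, hL⟩ := (contDiff_partialGradient hf).exists_norm_sub_le_of_isCompact h𝕏c T
  obtain ⟨η, hη, M, hM0, hM⟩ := exists_norm_multiplier_sub_le (g₀ := partialGradient f xstar T)
    h𝕏c hxstar.2 hLICQ (funext hstat) hcompl hL0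
  refine IsBigOP.of_le_of_tendsto hA6 tendsto_inv_sqrt_natCast_atTop
    (fun n => inv_nonneg.2 (Real.sqrt_nonneg n)) (fun n ω => Real.sqrt_nonneg _)
    (lt_min hη one_pos) (by positivity : 0 ≤ Real.sqrt rC * M) fun n ω hsmall => ?_
  set e := max (eucNorm (That n ω - T)) (max (frobNorm (Chat n ω - C)) (eucNorm (dhat n ω - d)))
  have hT : ‖That n ω - T‖ ≤ e := (norm_le_eucNorm _).trans (le_max_left _ _)
  have hC : ‖Chat n ω - C‖ ≤ e :=
    (norm_le_frobNorm _).trans ((le_max_left _ _).trans (le_max_right _ _))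
  have hd : ‖dhat n ω - d‖ ≤ e :=
    (norm_le_eucNorm _).trans ((le_max_right _ _).trans (le_max_right _ _))
  have hgrad := hL _ (hfeas n ω).1 _ hxstar.1 _ (hT.trans (hsmall.trans (min_le_right _ _)))
  have hγ := hM _ _ _ (partialGradient f (xhat n ω) (That n ω)) (γhat n ω) e
    (hsmall.trans (min_le_left _ _)) hC hd (hfeas n ω).1 (hγhatnonneg n ω)
    (funext (hstathat n ω)) (hcomplhat n ω) (hgrad.trans (by gcongr))
  calc eucNorm (γhat n ω - γstar) ≤ Real.sqrt rC * ‖γhat n ω - γstar‖ :=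
        eucNorm_le_sqrt_mul_norm _
    _ ≤ Real.sqrt rC * M * (eucNorm (xhat n ω - xstar) + e) := by
        rw [mul_assoc]
        gcongr
        exact hγ.trans (by gcongr; exact norm_le_eucNorm _)

/-- rate of convergence of the KKT multipliers of the approximating
program towards the true multipliers. -/
theorem stmt17 {Ω : Type*} [MeasurableSpace Ω] (P : Measure Ω) [IsProbabilityMeasure P]
    {k dT rC : ℕ}
    -- the true program (P_nl)
    (𝕏 : Set (Fin k → ℝ)) (h𝕏c : IsCompact 𝕏) (h𝕏ne : 𝕏.Nonempty)
    (𝕋 : Set (Fin dT → ℝ)) (T : Fin dT → ℝ) (hT : T ∈ 𝕋)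
    (f : (Fin k → ℝ) → (Fin dT → ℝ) → ℝ)
    (hf : ContDiff ℝ 2 (fun p : (Fin k → ℝ) × (Fin dT → ℝ) => f p.1 p.2))
    (C : Fin rC → Fin k → ℝ) (hCrows : ∀ j, C j ≠ 0) (d : Fin rC → ℝ)
    (Slin : Set (Fin k → ℝ))
    (hSlin : Slin = {x ∈ 𝕏 | ∀ j, ∑ i, C j i * x i ≤ d j})
    (hSne : Slin.Nonempty)
    (sol : Set (Fin k → ℝ))
    (hsol : sol = {x ∈ Slin | ∀ y ∈ Slin, f x T ≤ f y T})
    -- (A2)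
    (hA2 : ∀ x ∈ sol, ∀ ς : Fin k → ℝ, ς ≠ 0 →
      (fderiv ℝ (fun x' => f x' T) x) ς ≤ 0 →
      (∀ j, (∑ i, C j i * x i = d j) → ∑ i, C j i * ς i ≤ 0) →
      0 < (fderiv ℝ (fun y => (fderiv ℝ (fun x' => f x' T) y) ς) x) ς)
    -- (A3): unique optimal solution x*
    (xstar : Fin k → ℝ) (hA3 : sol = {xstar})
    -- (A4): LICQ and SC at x* with multipliers γ*
    (γstar : Fin rC → ℝ)
    (hLICQ : LinearIndependent ℝ
      (fun j : {j : Fin rC // ∑ i, C j i * xstar i = d j} => C j.1))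
    (hγnonneg : ∀ j, 0 ≤ γstar j)
    (hstat : ∀ i, (fderiv ℝ (fun x' => f x' T) xstar) (Pi.single i 1)
        + ∑ j, γstar j * C j i = 0)
    (hcompl : ∀ j, γstar j * ((∑ i, C j i * xstar i) - d j) = 0)
    (hSC : ∀ j, (∑ i, C j i * xstar i = d j) → 0 < γstar j)
    -- the approximating programs (P̂_nl)
    (That : ℕ → Ω → Fin dT → ℝ) (Chat : ℕ → Ω → Fin rC → Fin k → ℝ)
    (dhat : ℕ → Ω → Fin rC → ℝ) (xhat : ℕ → Ω → Fin k → ℝ)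
    (hThatm : ∀ n, Measurable (That n)) (hChatm : ∀ n, Measurable (Chat n))
    (hdhatm : ∀ n, Measurable (dhat n)) (hxhatm : ∀ n, Measurable (xhat n))
    (hfeas : ∀ n ω, xhat n ω ∈ 𝕏 ∧ ∀ j, ∑ i, Chat n ω j i * xhat n ω i ≤ dhat n ω j)
    (hopt : ∀ n ω, ∀ y ∈ 𝕏, (∀ j, ∑ i, Chat n ω j i * y i ≤ dhat n ω j) →
      f (xhat n ω) (That n ω) ≤ f y (That n ω))
    -- (A6): √n-consistency of the estimated program data
    (hA6 : IsBigOP P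
      (fun n ω =>
        max (eucNorm (That n ω - T)) (max (frobNorm (Chat n ω - C)) (eucNorm (dhat n ω - d))))
      (fun n _ => (Real.sqrt n)⁻¹))
    -- KKT multipliers of the approximating program at x̂
    (γhat : ℕ → Ω → Fin rC → ℝ) (hγhatm : ∀ n, Measurable (γhat n))
    (hγhatnonneg : ∀ n ω j, 0 ≤ γhat n ω j)
    (hstathat : ∀ n ω i, (fderiv ℝ (fun x' => f x' (That n ω)) (xhat n ω)) (Pi.single i 1)
        + ∑ j, γhat n ω j * Chat n ω j i = 0)
    (hcomplhat : ∀ n ω j,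
      γhat n ω j * ((∑ i, Chat n ω j i * xhat n ω i) - dhat n ω j) = 0) :
    IsBigOP P (fun n ω => eucNorm (γhat n ω - γstar))
      (fun n ω => eucNorm (xhat n ω - xstar) + (Real.sqrt n)⁻¹) :=
  stmt17_general P 𝕏 h𝕏c T f hf C d Slin hSlin sol hsol xstar hA3 γstar hLICQ hstat hcompl That Chat
    dhat xhat hfeas hA6 γhat hγhatnonneg hstathat hcomplhat
end
end
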